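/- Let E be a finite-dimensional real inner product space with dim E ≥ 1 and let h : E → ℝ be convex, differentiable, positively homogeneous of degree 2 (h(t • x) = t² · h(x) for all t ≥ 0, x ∈ E), with 1-Lipschitz gradient ∇h, and suppose there is c > 0 such that h(y) ≥ c for every y with ‖y‖ = 1. Then for every x ∈ E, ‖x − ∇h(x)‖ ≤ (1/√(1 + 2c)) · ‖x‖; in particular the unit-step gradient descent map x ↦ x − ∇h(x) contracts linearly toward the origin. -/

import Mathlib

/-!
Euler's identity gives `⟪∇h x, x⟫ = 2 h x`, and the descent lemma for the `1`-Lipschitz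
gradient, applied at `x - ∇h x` together with `h ≥ 0`, gives `‖∇h x‖² ≤ 2 h x`. Hence
`‖x - ∇h x‖² = ‖x‖² - 4 h x + ‖∇h x‖² ≤ ‖x‖² - 2 h x ≤ (1 - 2c) ‖x‖²` by homogeneity, and
`1 - 2c ≤ 1 / (1 + 2c)`.
-/

open Set
open scoped NNReal RealInnerProductSpace

section Homogeneous

variable {E : Type*} [NormedAddCommGroup E] [NormedSpace ℝ E] {h : E → ℝ} {n : ℕ}

lemma apply_zero_of_homogeneous (hn : n ≠ 0)
    (hhom : ∀ t : ℝ, 0 ≤ t → ∀ x : E, h (t • x) = t ^ n * h x) : h 0 = 0 := by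
  simpa [zero_pow hn] using hhom 0 le_rfl 0

lemma mul_norm_pow_le_of_homogeneous (hn : n ≠ 0)
    (hhom : ∀ t : ℝ, 0 ≤ t → ∀ x : E, h (t • x) = t ^ n * h x) {c : ℝ}
    (hsphere : ∀ y : E, ‖y‖ = 1 → c ≤ h y) (z : E) : c * ‖z‖ ^ n ≤ h z := by
  rcases eq_or_ne z 0 with rfl | hz
  · simp [zero_pow hn, apply_zero_of_homogeneous hn hhom]
  have hnorm : 0 < ‖z‖ := norm_pos_iff.mpr hz
  have hunit : ‖‖z‖⁻¹ • z‖ = 1 := by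
    rw [norm_smul, norm_inv, norm_norm, inv_mul_cancel₀ hnorm.ne']
  have hscale : h z = ‖z‖ ^ n * h (‖z‖⁻¹ • z) := by
    rw [← hhom _ hnorm.le, smul_smul, mul_inv_cancel₀ hnorm.ne', one_smul]
  rw [hscale, mul_comm]
  exact mul_le_mul_of_nonneg_left (hsphere _ hunit) (by positivity)

end Homogeneous

section Gradient

variable {E : Type*} [NormedAddCommGroup E] [InnerProductSpace ℝ E] [CompleteSpace E]
  {h : E → ℝ}

lemma hasDerivAt_comp_add_smul {x v : E} {t : ℝ} (hd : DifferentiableAt ℝ h (x + t • v)) :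
    HasDerivAt (fun s : ℝ => h (x + s • v)) ⟪gradient h (x + t • v), v⟫ t := by
  have hline : HasDerivAt (fun s : ℝ => x + s • v) v t := by
    simpa using ((hasDerivAt_id t).smul_const v).const_add x
  exact (hd.hasGradientAt.hasFDerivAt.comp_hasDerivAt t hline).congr_deriv (by simp)

lemma inner_gradient_self_of_homogeneous {n : ℕ}
    (hhom : ∀ t : ℝ, 0 ≤ t → ∀ x : E, h (t • x) = t ^ n * h x) {x : E}
    (hd : DifferentiableAt ℝ h x) : ⟪gradient h x, x⟫ = n * h x := by
  have hray : (fun s : ℝ => h (0 + s • x)) =ᶠ[nhds 1] fun s => s ^ n * h x := by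
    filter_upwards [eventually_gt_nhds one_pos] with s hs
    rw [zero_add, hhom s hs.le]
  have hderiv := (hasDerivAt_comp_add_smul (x := 0) (t := 1)
    (by simpa using hd)).congr_of_eventuallyEq hray.symm
  simpa using hderiv.unique ((hasDerivAt_pow n (1 : ℝ)).mul_const (h x))

lemma apply_add_le_of_lipschitzWith_gradient {L : ℝ≥0} (hdiff : Differentiable ℝ h)
    (hlip : LipschitzWith L (gradient h)) (x v : E) :
    h (x + v) ≤ h x + ⟪gradient h x, v⟫ + L / 2 * ‖v‖ ^ 2 := by
  set B : ℝ → ℝ := fun s => h x + s * ⟪gradient h x, v⟫ + L / 2 * s ^ 2 * ‖v‖ ^ 2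
  have hB : ∀ s, HasDerivAt B (⟪gradient h x, v⟫ + L * s * ‖v‖ ^ 2) s := fun s =>
    ((((hasDerivAt_id s).mul_const ⟪gradient h x, v⟫).const_add (h x)).add
      (((hasDerivAt_pow 2 s).const_mul (L / 2 : ℝ)).mul_const (‖v‖ ^ 2))).congr_deriv
        (by push_cast; ring)
  have hf : ∀ s, HasDerivAt (fun s : ℝ => h (x + s • v)) ⟪gradient h (x + s • v), v⟫ s :=
    fun s => hasDerivAt_comp_add_smul (hdiff _)
  have hslope : ∀ s ∈ Ico (0 : ℝ) 1,
      ⟪gradient h (x + s • v), v⟫ ≤ ⟪gradient h x, v⟫ + L * s * ‖v‖ ^ 2 := fun s hs => by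
    have hgrad : ‖gradient h (x + s • v) - gradient h x‖ ≤ L * (s * ‖v‖) := by
      simpa [dist_eq_norm, norm_smul, abs_of_nonneg hs.1] using hlip.dist_le_mul (x + s • v) x
    have := (real_inner_le_norm _ v).trans (mul_le_mul_of_nonneg_right hgrad (norm_nonneg v))
    rw [inner_sub_left] at this
    nlinarith
  have := image_le_of_deriv_right_le_deriv_boundary
    (fun s _ => (hf s).continuousAt.continuousWithinAt)
    (fun s _ => (hf s).hasDerivWithinAt) (by simp [B])
    (fun s _ => (hB s).continuousAt.continuousWithinAt)
    (fun s _ => (hB s).hasDerivWithinAt) hslope (right_mem_Icc.mpr zero_le_one)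
  simpa [B] using this

lemma sq_norm_gradient_le_of_lipschitzWith_gradient {L : ℝ≥0} (hL : 0 < L)
    (hdiff : Differentiable ℝ h) (hlip : LipschitzWith L (gradient h)) {m : ℝ}
    (hm : ∀ y, m ≤ h y) (x : E) : ‖gradient h x‖ ^ 2 ≤ 2 * L * (h x - m) := by
  have hL_real : (0 : ℝ) < L := hL
  have := (hm _).trans
    (apply_add_le_of_lipschitzWith_gradient hdiff hlip x (-(L : ℝ)⁻¹ • gradient h x))
  rw [inner_smul_right, real_inner_self_eq_norm_sq, norm_smul, norm_neg, norm_inv,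
    Real.norm_of_nonneg hL_real.le] at this
  field_simp at this
  nlinarith

end Gradient

theorem gradient_step_linear_contraction_general
    {E : Type*} [NormedAddCommGroup E] [InnerProductSpace ℝ E]
    [FiniteDimensional ℝ E]
    (h : E → ℝ) (hdiff : Differentiable ℝ h)
    (hhom : ∀ t : ℝ, 0 ≤ t → ∀ x : E, h (t • x) = t ^ 2 * h x)
    (hlip : ∀ x y : E, ‖gradient h x - gradient h y‖ ≤ ‖x - y‖)
    (c : ℝ) (hc : 0 < c) (hsphere : ∀ y : E, ‖y‖ = 1 → c ≤ h y) :
    ∀ x : E, ‖x - gradient h x‖ ≤ (1 / Real.sqrt (1 + 2 * c)) * ‖x‖ := by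
  intro x
  have hlipschitz : LipschitzWith 1 (gradient h) :=
    LipschitzWith.of_dist_le_mul fun x y => by simpa [dist_eq_norm] using hlip x y
  have hlower := mul_norm_pow_le_of_homogeneous two_ne_zero hhom hsphere
  have heuler : ⟪gradient h x, x⟫ = 2 * h x := by
    exact_mod_cast inner_gradient_self_of_homogeneous hhom (hdiff x)
  have hgrad : ‖gradient h x‖ ^ 2 ≤ 2 * h x := by
    simpa using sq_norm_gradient_le_of_lipschitzWith_gradient one_pos hdiff hlipschitz
      (fun y => (mul_nonneg hc.le (sq_nonneg ‖y‖)).trans (hlower y)) x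
  have hpos : 0 < 1 + 2 * c := by linarith
  have hsq : ‖x - gradient h x‖ ^ 2 * (1 + 2 * c) ≤ ‖x‖ ^ 2 := by
    rw [norm_sub_sq_real, real_inner_comm, heuler]
    nlinarith [hlower x, sq_nonneg (2 * c * ‖x‖)]
  rw [one_div_mul_eq_div, le_div_iff₀ (Real.sqrt_pos.mpr hpos)]
  calc ‖x - gradient h x‖ * √(1 + 2 * c) = √(‖x - gradient h x‖ ^ 2 * (1 + 2 * c)) := by
        rw [Real.sqrt_mul' _ hpos.le, Real.sqrt_sq (norm_nonneg _)]
    _ ≤ √(‖x‖ ^ 2) := Real.sqrt_le_sqrt hsq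
    _ = ‖x‖ := Real.sqrt_sq (norm_nonneg x)

/-- If `h : E → ℝ` is convex, differentiable, positively homogeneous of degree 2, with
`1`-Lipschitz gradient, and bounded below by `c > 0` on the unit sphere, then the unit-step
gradient descent map satisfies `‖x - ∇h x‖ ≤ ‖x‖ / √(1 + 2c)` for every `x`. -/
theorem gradient_step_linear_contraction
    {E : Type*} [NormedAddCommGroup E] [InnerProductSpace ℝ E]
    [FiniteDimensional ℝ E] (hdim : 1 ≤ Module.finrank ℝ E)
    (h : E → ℝ) (hconv : ConvexOn ℝ Set.univ h) (hdiff : Differentiable ℝ h)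
    (hhom : ∀ t : ℝ, 0 ≤ t → ∀ x : E, h (t • x) = t ^ 2 * h x)
    (hlip : ∀ x y : E, ‖gradient h x - gradient h y‖ ≤ ‖x - y‖)
    (c : ℝ) (hc : 0 < c) (hsphere : ∀ y : E, ‖y‖ = 1 → c ≤ h y) :
    ∀ x : E, ‖x - gradient h x‖ ≤ (1 / Real.sqrt (1 + 2 * c)) * ‖x‖ :=
  gradient_step_linear_contraction_general h hdiff hhom hlip c hc hsphere
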